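/- Let 1 ≤ p < ∞ and let A be a bounded linear operator on L^p(𝕋) such that ⟨Aχ_k, χ_j⟩ = ⟨Aχ_{k+1}, χ_{j+1}⟩ for all j,k ∈ ℤ (Laurent structure). Then there exists a ∈ L^∞(𝕋) with A = M(a), â_{j−k} = ⟨Aχ_k,χ_j⟩ for all j,k ∈ ℤ, and ‖A‖ = ‖a‖_∞. -/

import Mathlib

open scoped ENNReal Real
open MeasureTheory AddCircle Filter BoundedContinuousFunction
open scoped Topology

section Aux
variable {T : ℝ} [hT : Fact (0 < T)]

lemma norm_fourier_eq_one (n : ℤ) (x : AddCircle T) : ‖fourier n x‖ = 1 := by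
  rw [fourier_apply]; exact Circle.norm_coe _

lemma integrable_fourier_smul {f : AddCircle T → ℂ} (hf : Integrable f haarAddCircle) (n : ℤ) :
    Integrable (fun t => fourier n t • f t) haarAddCircle :=
  hf.bdd_mul (Continuous.aestronglyMeasurable (by continuity))
    (Filter.Eventually.of_forall fun x => (norm_fourier_eq_one n x).le)

lemma fourierCoeff_sub {f g : AddCircle T → ℂ} (hf : Integrable f haarAddCircle)
    (hg : Integrable g haarAddCircle) (n : ℤ) :
    fourierCoeff (f - g) n = fourierCoeff f n - fourierCoeff g n := by
  simp only [fourierCoeff, Pi.sub_apply, smul_sub]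
  exact integral_sub (integrable_fourier_smul hf _) (integrable_fourier_smul hg _)

private lemma clip_lip (x y : ℝ) : |max 0 (min 1 x) - max 0 (min 1 y)| ≤ |x - y| := by
  calc |max 0 (min 1 x) - max 0 (min 1 y)|
      = |max (min 1 x) 0 - max (min 1 y) 0| := by rw [max_comm, max_comm (min 1 y)]
    _ ≤ |min 1 x - min 1 y| := abs_max_sub_max_le_abs _ _ _
    _ ≤ max |(1:ℝ) - 1| |x - y| := abs_min_sub_min_le_max _ _ _ _
    _ = |x - y| := by simp

lemma ae_eq_zero_of_fourierCoeff_eq_zero {f : AddCircle T → ℂ}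
    (hf : Integrable f haarAddCircle) (h : ∀ n, fourierCoeff f n = 0) :
    f =ᵐ[haarAddCircle] 0 := by
  set μ : Measure (AddCircle T) := haarAddCircle with hμ
  have hbd : ∀ g : C(AddCircle T, ℂ), Integrable (fun x => g x * f x) μ := fun g =>
    hf.bdd_mul g.continuous.aestronglyMeasurable (Filter.Eventually.of_forall fun x => g.norm_coe_le_norm x)
  -- the pairing as a continuous linear map
  let Φ : C(AddCircle T, ℂ) →L[ℂ] ℂ := LinearMap.mkContinuous
    { toFun := fun g => ∫ x, g x * f x ∂μ
      map_add' := fun g₁ g₂ => by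
        simp only [ContinuousMap.add_apply, add_mul]
        exact integral_add (hbd g₁) (hbd g₂)
      map_smul' := fun c g => by
        simp only [ContinuousMap.smul_apply, smul_eq_mul, mul_assoc, RingHom.id_apply]
        exact integral_const_mul c _ }
    (∫ x, ‖f x‖ ∂μ)
    (fun g => by
      refine (norm_integral_le_integral_norm _).trans ?_
      rw [mul_comm]
      calc ∫ x, ‖g x * f x‖ ∂μ ≤ ∫ x, ‖g‖ * ‖f x‖ ∂μ := by
            refine integral_mono (hbd g).norm (hf.norm.const_mul _) fun x => ?_
            rw [norm_mul]
            exact mul_le_mul_of_nonneg_right (g.norm_coe_le_norm x) (norm_nonneg _)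
        _ = ‖g‖ * ∫ x, ‖f x‖ ∂μ := integral_const_mul _ _)
  have hΦf : ∀ n : ℤ, Φ (fourier n) = 0 := by
    intro n
    have := h (-n)
    rw [fourierCoeff] at this
    show (∫ x, (fourier n) x * f x ∂μ) = 0
    simpa only [neg_neg, smul_eq_mul] using this
  have key : ∀ g : C(AddCircle T, ℂ), ∫ x, g x * f x ∂μ = 0 := by
    have hspan : Submodule.span ℂ (Set.range (fourier (T := T))) ≤ LinearMap.ker (Φ : C(AddCircle T, ℂ) →ₗ[ℂ] ℂ) := by
      rw [Submodule.span_le]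
      rintro _ ⟨n, rfl⟩
      exact hΦf n
    have hclosed : (Submodule.span ℂ (Set.range (fourier (T := T)))).topologicalClosure ≤
        LinearMap.ker (Φ : C(AddCircle T, ℂ) →ₗ[ℂ] ℂ) :=
      Submodule.topologicalClosure_minimal _ hspan (ContinuousLinearMap.isClosed_ker Φ)
    rw [span_fourier_closure_eq_top] at hclosed
    intro g
    exact hclosed (Submodule.mem_top : g ∈ ⊤)
  -- set integrals vanish
  have hset : ∀ s, MeasurableSet s → μ s < ∞ → ∫ x in s, f x ∂μ = 0 := by
    intro s hs _
    have hind : MemLp (s.indicator fun _ => (1 : ℝ)) 1 μ :=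
      memLp_indicator_const 1 hs 1 (Or.inr (measure_ne_top μ s))
    have happrox : ∀ n : ℕ, ∃ g : AddCircle T →ᵇ ℝ,
        eLpNorm ((s.indicator fun _ => (1 : ℝ)) - (g : AddCircle T → ℝ)) 1 μ ≤ ((n : ℝ≥0∞))⁻¹ := by
      intro n
      obtain ⟨g, hg, -⟩ := hind.exists_boundedContinuous_eLpNorm_sub_le ENNReal.one_ne_top
        (ENNReal.inv_ne_zero.mpr (ENNReal.natCast_ne_top n))
      exact ⟨g, hg⟩
    choose g hg using happrox
    set u : ℕ → AddCircle T → ℝ := fun n x => max 0 (min 1 (g n x)) with hu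
    have hu_cont : ∀ n, Continuous (u n) := fun n =>
      continuous_const.max (continuous_const.min (g n).continuous)
    have hu0 : ∀ n x, 0 ≤ u n x := fun n x => le_max_left _ _
    have hu1 : ∀ n x, u n x ≤ 1 := fun n x =>
      max_le zero_le_one (min_le_left _ _)
    have hu_close : ∀ n, eLpNorm ((s.indicator fun _ => (1 : ℝ)) - u n) 1 μ ≤ ((n : ℝ≥0∞))⁻¹ := by
      intro n
      refine le_trans (eLpNorm_mono fun x => ?_) (hg n)
      simp only [Pi.sub_apply, Real.norm_eq_abs]
      by_cases hx : x ∈ s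
      · simp only [Set.indicator_of_mem hx]
        have h1 : (1 : ℝ) = max 0 (min 1 1) := by norm_num
        calc |1 - u n x| = |max 0 (min 1 1) - max 0 (min 1 (g n x))| := by rw [← h1]
          _ ≤ |1 - g n x| := clip_lip _ _
      · simp only [Set.indicator_of_notMem hx]
        have h0 : (0 : ℝ) = max 0 (min 1 0) := by norm_num
        calc |0 - u n x| = |max 0 (min 1 0) - max 0 (min 1 (g n x))| := by rw [← h0]
          _ ≤ |0 - g n x| := clip_lip _ _
    have hmeas : TendstoInMeasure μ u atTop (s.indicator fun _ => (1 : ℝ)) := by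
      refine tendstoInMeasure_of_tendsto_eLpNorm one_ne_zero
        (fun n => (hu_cont n).aestronglyMeasurable) hind.aestronglyMeasurable ?_
      refine tendsto_of_tendsto_of_tendsto_of_le_of_le tendsto_const_nhds
        ENNReal.tendsto_inv_nat_nhds_zero (fun n => zero_le) (fun n => ?_)
      rw [eLpNorm_sub_comm]
      exact hu_close n
    obtain ⟨ns, -, hae⟩ := hmeas.exists_seq_tendsto_ae
    have hdom : Tendsto (fun k => ∫ x, ((u (ns k) x : ℝ) : ℂ) * f x ∂μ) atTop
        (𝓝 (∫ x, ((s.indicator (fun _ => (1 : ℝ)) x : ℝ) : ℂ) * f x ∂μ)) := by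
      refine tendsto_integral_of_dominated_convergence (fun x => ‖f x‖)
        (fun k => ((Complex.continuous_ofReal.comp (hu_cont (ns k))).aestronglyMeasurable).mul
          hf.1) hf.norm (fun k => ?_) ?_
      · filter_upwards with x
        rw [norm_mul, Complex.norm_real]
        calc ‖u (ns k) x‖ * ‖f x‖ ≤ 1 * ‖f x‖ := by
              refine mul_le_mul_of_nonneg_right ?_ (norm_nonneg _)
              rw [Real.norm_eq_abs, abs_of_nonneg (hu0 _ _)]
              exact hu1 _ _
          _ = ‖f x‖ := one_mul _
      · filter_upwards [hae] with x hx
        exact ((Complex.continuous_ofReal.tendsto _).comp hx).mul tendsto_const_nhds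
    have hzero : ∀ k, ∫ x, ((u (ns k) x : ℝ) : ℂ) * f x ∂μ = 0 := fun k =>
      key ⟨fun x => ((u (ns k) x : ℝ) : ℂ), Complex.continuous_ofReal.comp (hu_cont (ns k))⟩
    have h0 : (∫ x, ((s.indicator (fun _ => (1 : ℝ)) x : ℝ) : ℂ) * f x ∂μ) = 0 := by
      have hc : Tendsto (fun k => ∫ x, ((u (ns k) x : ℝ) : ℂ) * f x ∂μ) atTop (𝓝 0) := by
        simp only [hzero]
        exact tendsto_const_nhds
      exact tendsto_nhds_unique hdom hc
    have hfun : (fun x => ((s.indicator (fun _ => (1 : ℝ)) x : ℝ) : ℂ) * f x) = s.indicator f := by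
      funext x; by_cases hx : x ∈ s <;> simp [hx]
    rw [hfun, integral_indicator hs] at h0
    exact h0
  exact hf.ae_eq_zero_of_forall_setIntegral_eq_zero hset

lemma fourierCoeff_mul_fourier (a : AddCircle T → ℂ) (k j : ℤ) :
    fourierCoeff (fun x => a x * fourier k x) j = fourierCoeff a (j - k) := by
  simp only [fourierCoeff, smul_eq_mul]
  congr 1
  funext t
  have h : fourier (-(j - k)) t = fourier (-j) t * fourier k t := by
    rw [← fourier_add]
    congr 1
    ring
  rw [h]
  ring

end Aux

instance : Fact (0 < 2 * Real.pi) := ⟨by positivity⟩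

/-- `L^p` of the circle (with normalized Haar measure). -/
noncomputable abbrev LpT (p : ℝ≥0∞) :=
  Lp ℂ p (haarAddCircle : Measure (AddCircle (2 * π)))

set_option maxHeartbeats 1000000 in
set_option synthInstance.maxHeartbeats 200000 in
/-- Brown–Halmos type result for `L^p(𝕋)`, `1 ≤ p < ∞`: a bounded operator `A`
with Laurent structure, i.e. `⟨Aχ_k, χ_j⟩ = ⟨Aχ_{k+1}, χ_{j+1}⟩` for all
`j, k ∈ ℤ`, is a multiplication operator `M(a)` with `a ∈ L^∞`,
`â_{j-k} = ⟨Aχ_k, χ_j⟩`, and `‖A‖ = ‖a‖_∞`.  (Here the pairing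
`⟨f, χ_j⟩ = (1/2π)∫ f χ̄_j` is the `j`-th Fourier coefficient of `f`.) -/
theorem statement13 (p : ℝ≥0∞) [Fact (1 ≤ p)] (hp : p ≠ ∞)
    (A : LpT p →L[ℂ] LpT p)
    (hA : ∀ j k : ℤ,
      fourierCoeff ((A (fourierLp p k)) : AddCircle (2 * π) → ℂ) j =
      fourierCoeff ((A (fourierLp p (k + 1))) : AddCircle (2 * π) → ℂ) (j + 1)) :
    ∃ a : AddCircle (2 * π) → ℂ,
      MemLp a ∞ (haarAddCircle : Measure (AddCircle (2 * π))) ∧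
      (∀ f : LpT p, (A f : AddCircle (2 * π) → ℂ)
          =ᵐ[(haarAddCircle : Measure (AddCircle (2 * π)))]
          fun x => a x * (f : AddCircle (2 * π) → ℂ) x) ∧
      (∀ j k : ℤ, fourierCoeff a (j - k) =
        fourierCoeff ((A (fourierLp p k)) : AddCircle (2 * π) → ℂ) j) ∧
      ‖A‖ = (eLpNorm a ∞ (haarAddCircle : Measure (AddCircle (2 * π)))).toReal := by
  have hp1 : (1 : ℝ≥0∞) ≤ p := Fact.out
  have hp0 : p ≠ 0 := (lt_of_lt_of_le zero_lt_one hp1).ne'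
  set μ : Measure (AddCircle (2 * π)) := haarAddCircle with hμdef
  have hint : ∀ g : LpT p, Integrable (g : AddCircle (2 * π) → ℂ) μ :=
    fun g => (Lp.memLp g).integrable hp1
  set a : AddCircle (2 * π) → ℂ := (A (fourierLp p 0) : AddCircle (2 * π) → ℂ) with ha_def
  have ha_int : Integrable a μ := hint _
  -- Step 1: Laurent structure gives the Fourier coefficients
  have hcoeff : ∀ j k : ℤ, fourierCoeff ((A (fourierLp p k)) : AddCircle (2 * π) → ℂ) j
      = fourierCoeff a (j - k) := by
    have key : ∀ k : ℤ, ∀ j : ℤ, fourierCoeff ((A (fourierLp p k)) : AddCircle (2 * π) → ℂ) j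
        = fourierCoeff a (j - k) := by
      intro k
      induction k using Int.induction_on with
      | zero => intro j; rw [sub_zero, ha_def]
      | succ k ih =>
        intro j
        have h1 := hA (j - 1) (k : ℤ)
        rw [sub_add_cancel] at h1
        rw [← h1, ih (j - 1)]
        congr 1
        ring
      | pred k ih =>
        intro j
        have h1 := hA j (-(k : ℤ) - 1)
        rw [sub_add_cancel] at h1
        rw [h1, ih (j + 1)]
        congr 1
        ring
    exact fun j k => key k j
  -- Step 2: on basis vectors, A acts as multiplication by a
  have hbasis : ∀ k : ℤ, ((A (fourierLp p k)) : AddCircle (2 * π) → ℂ) =ᵐ[μ]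
      fun x => a x * fourier k x := by
    intro k
    have h2 : Integrable (fun x => a x * fourier k x) μ := by
      have := ha_int.bdd_mul (Continuous.aestronglyMeasurable (map_continuous (fourier k)))
        (Filter.Eventually.of_forall fun x => (norm_fourier_eq_one k x).le)
      simpa [mul_comm] using this
    have hd : (((A (fourierLp p k)) : AddCircle (2 * π) → ℂ) - fun x => a x * fourier k x)
        =ᵐ[μ] 0 := by
      apply ae_eq_zero_of_fourierCoeff_eq_zero ((hint _).sub h2)
      intro n
      rw [fourierCoeff_sub (hint _) h2, hcoeff n k, fourierCoeff_mul_fourier, sub_self]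
    filter_upwards [hd] with x hx
    exact sub_eq_zero.mp hx
  -- Step 3: the set of functions on which A is multiplication by a is a closed submodule
  let S : Submodule ℂ (LpT p) :=
    { carrier := {g : LpT p | (A g : AddCircle (2 * π) → ℂ) =ᵐ[μ]
        fun x => a x * (g : AddCircle (2 * π) → ℂ) x}
      add_mem' := by
        intro g₁ g₂ h1 h2
        have hadd : (A (g₁ + g₂) : AddCircle (2 * π) → ℂ) =ᵐ[μ]
            (A g₁ : AddCircle (2 * π) → ℂ) + (A g₂ : AddCircle (2 * π) → ℂ) := by
          rw [map_add]; exact Lp.coeFn_add _ _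
        filter_upwards [hadd, h1, h2, Lp.coeFn_add g₁ g₂] with x hx h1x h2x hgx
        simp only [Pi.add_apply] at hx hgx
        rw [hx, h1x, h2x, hgx, mul_add]
      zero_mem' := by
        have h0 : (A 0 : AddCircle (2 * π) → ℂ) =ᵐ[μ] 0 := by
          rw [map_zero]; exact Lp.coeFn_zero ℂ p μ
        filter_upwards [h0, Lp.coeFn_zero ℂ p μ] with x hx hx0
        rw [hx, hx0]
        simp
      smul_mem' := by
        intro c g hg
        have hsm : (A (c • g) : AddCircle (2 * π) → ℂ) =ᵐ[μ]
            c • (A g : AddCircle (2 * π) → ℂ) := by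
          rw [A.map_smul]; exact Lp.coeFn_smul _ _
        filter_upwards [hsm, hg, Lp.coeFn_smul c g] with x hx hgx hcx
        simp only [Pi.smul_apply, smul_eq_mul] at hx hcx ⊢
        rw [hx, hgx, hcx]
        ring }
  have hSclosed : IsClosed (S : Set (LpT p)) := by
    refine IsSeqClosed.isClosed ?_
    intro gs g hgs hlim
    have key : ∀ (fs : ℕ → LpT p) (f : LpT p), Filter.Tendsto fs atTop (𝓝 f) →
        ∃ ns : ℕ → ℕ, StrictMono ns ∧ ∀ᵐ x ∂μ,
          Filter.Tendsto (fun k => (fs (ns k) : AddCircle (2 * π) → ℂ) x) atTop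
            (𝓝 ((f : AddCircle (2 * π) → ℂ) x)) := by
      intro fs f hf
      have h1 : Filter.Tendsto
          (fun n => eLpNorm ((fs n : AddCircle (2 * π) → ℂ) - (f : AddCircle (2 * π) → ℂ)) p μ)
          atTop (𝓝 0) := by
        have h2 : ∀ n, eLpNorm ((fs n : AddCircle (2 * π) → ℂ) - (f : AddCircle (2 * π) → ℂ)) p μ
            = ENNReal.ofReal ‖fs n - f‖ := by
          intro n
          rw [← eLpNorm_congr_ae (Lp.coeFn_sub (fs n) f), Lp.norm_def,
            ENNReal.ofReal_toReal (Lp.eLpNorm_ne_top _)]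
        simp_rw [h2]
        rw [← ENNReal.ofReal_zero]
        exact ENNReal.tendsto_ofReal (tendsto_iff_norm_sub_tendsto_zero.mp hf)
      have h3 := tendstoInMeasure_of_tendsto_eLpNorm hp0
        (fun n => Lp.aestronglyMeasurable (fs n)) (Lp.aestronglyMeasurable f) h1
      exact h3.exists_seq_tendsto_ae
    obtain ⟨ns, hns, hae1⟩ := key gs g hlim
    have hA' : Filter.Tendsto (fun k => A (gs (ns k))) atTop (𝓝 (A g)) :=
      (A.continuous.tendsto g).comp (hlim.comp hns.tendsto_atTop)
    obtain ⟨ms, hms, hae2⟩ := key (fun k => A (gs (ns k))) (A g) hA'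
    have hae1' : ∀ᵐ x ∂μ, Filter.Tendsto
        (fun k => (gs (ns (ms k)) : AddCircle (2 * π) → ℂ) x) atTop
        (𝓝 ((g : AddCircle (2 * π) → ℂ) x)) := by
      filter_upwards [hae1] with x hx using hx.comp hms.tendsto_atTop
    have hmem : ∀ᵐ x ∂μ, ∀ k, (A (gs (ns (ms k))) : AddCircle (2 * π) → ℂ) x
        = a x * (gs (ns (ms k)) : AddCircle (2 * π) → ℂ) x := by
      rw [ae_all_iff]; exact fun k => hgs (ns (ms k))
    filter_upwards [hae1', hae2, hmem] with x h1x h2x h3x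
    refine tendsto_nhds_unique h2x ?_
    have : Filter.Tendsto (fun k => a x * (gs (ns (ms k)) : AddCircle (2 * π) → ℂ) x) atTop
        (𝓝 (a x * (g : AddCircle (2 * π) → ℂ) x)) := tendsto_const_nhds.mul h1x
    refine this.congr fun k => (h3x k).symm
  have hall : ∀ f : LpT p, (A f : AddCircle (2 * π) → ℂ) =ᵐ[μ]
      fun x => a x * (f : AddCircle (2 * π) → ℂ) x := by
    have hle : (Submodule.span ℂ (Set.range (fourierLp p))).topologicalClosure ≤ S := by
      refine Submodule.topologicalClosure_minimal _ ?_ hSclosed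
      rw [Submodule.span_le]
      rintro _ ⟨k, rfl⟩
      show (A (fourierLp p k) : AddCircle (2 * π) → ℂ) =ᵐ[μ]
        fun x => a x * (fourierLp p k : AddCircle (2 * π) → ℂ) x
      filter_upwards [hbasis k, coeFn_fourierLp p k] with x hx hkx
      rw [hx, hkx]
    rw [span_fourierLp_closure_eq_top hp] at hle
    exact fun f => hle Submodule.mem_top
  -- Step 4: essential bound on a
  have hCnn : (0 : ℝ) ≤ ‖A‖ := norm_nonneg _
  have ha_sm : StronglyMeasurable a := Lp.stronglyMeasurable _
  have hbound : ∀ c : ℝ, ‖A‖ < c → μ {x | c ≤ ‖a x‖} = 0 := by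
    intro c hc
    set s := {x | c ≤ ‖a x‖} with hs_def
    have hs : MeasurableSet s :=
      measurableSet_le measurable_const ha_sm.measurable.norm
    by_contra hne
    have hμs : μ s ≠ ∞ := measure_ne_top μ s
    have hm : MemLp (s.indicator fun _ => (1 : ℂ)) p μ := memLp_indicator_const p hs 1 (Or.inr hμs)
    set F := hm.toLp _ with hF
    have hFcoe : (F : AddCircle (2 * π) → ℂ) =ᵐ[μ] s.indicator fun _ => (1 : ℂ) :=
      hm.coeFn_toLp
    have hAF : (A F : AddCircle (2 * π) → ℂ) =ᵐ[μ]
        fun x => a x * s.indicator (fun _ => (1 : ℂ)) x := by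
      filter_upwards [hall F, hFcoe] with x h1 h2
      rw [h1, h2]
    have hc0 : (0 : ℝ) ≤ c := hCnn.trans hc.le
    have hMne0 : μ s ^ (1 / p.toReal) ≠ 0 :=
      (ENNReal.rpow_pos (lt_of_le_of_ne zero_le (Ne.symm hne)) hμs).ne'
    have hMnetop : μ s ^ (1 / p.toReal) ≠ ∞ :=
      ENNReal.rpow_ne_top_of_nonneg (by positivity) hμs
    have hlower : ENNReal.ofReal c * μ s ^ (1 / p.toReal)
        ≤ ENNReal.ofReal ‖A‖ * μ s ^ (1 / p.toReal) := by
      calc ENNReal.ofReal c * μ s ^ (1 / p.toReal)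
          = eLpNorm (s.indicator fun _ => ((c : ℝ) : ℂ)) p μ := by
            rw [eLpNorm_indicator_const hs hp0 hp]
            congr 1
            rw [← ofReal_norm, Complex.norm_real, Real.norm_eq_abs,
              abs_of_nonneg hc0]
        _ ≤ eLpNorm (fun x => a x * s.indicator (fun _ => (1 : ℂ)) x) p μ := by
            refine eLpNorm_mono fun x => ?_
            by_cases hx : x ∈ s
            · simp only [Set.indicator_of_mem hx, mul_one, Complex.norm_real,
                Real.norm_eq_abs, abs_of_nonneg hc0]
              exact hx
            · simp [Set.indicator_of_notMem hx]
        _ = eLpNorm (A F : AddCircle (2 * π) → ℂ) p μ := (eLpNorm_congr_ae hAF).symm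
        _ = ENNReal.ofReal ‖A F‖ := by
            rw [Lp.norm_def, ENNReal.ofReal_toReal (Lp.eLpNorm_ne_top _)]
        _ ≤ ENNReal.ofReal (‖A‖ * ‖F‖) := ENNReal.ofReal_le_ofReal (A.le_opNorm F)
        _ = ENNReal.ofReal ‖A‖ * ENNReal.ofReal ‖F‖ := ENNReal.ofReal_mul hCnn
        _ = ENNReal.ofReal ‖A‖ * μ s ^ (1 / p.toReal) := by
            congr 1
            have hfin : eLpNorm (s.indicator fun _ => (1 : ℂ)) p μ ≠ ∞ := by
              rw [eLpNorm_indicator_const hs hp0 hp]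
              exact ENNReal.mul_ne_top (by simp) hMnetop
            rw [hF, Lp.norm_toLp _ hm, ENNReal.ofReal_toReal hfin,
              eLpNorm_indicator_const hs hp0 hp]
            simp
    have : ENNReal.ofReal c ≤ ENNReal.ofReal ‖A‖ :=
      (ENNReal.mul_le_mul_iff_left hMne0 hMnetop).mp hlower
    rw [ENNReal.ofReal_le_ofReal_iff hCnn] at this
    exact absurd this (not_le.mpr hc)
  have hae_bound : ∀ᵐ x ∂μ, ‖a x‖ ≤ ‖A‖ := by
    rw [ae_iff]
    refine measure_mono_null (fun x hx => ?_) (measure_iUnion_null fun n : ℕ =>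
      hbound (‖A‖ + 1 / (n + 1)) (lt_add_of_pos_right _ (by positivity)))
    rw [Set.mem_setOf_eq, not_le] at hx
    obtain ⟨n, hn⟩ := exists_nat_one_div_lt (sub_pos.mpr hx)
    exact Set.mem_iUnion.mpr ⟨n, by simp only [Set.mem_setOf_eq]; push_cast; linarith⟩
  have hmeminf : MemLp a ∞ μ := by
    refine ⟨Lp.aestronglyMeasurable _, ?_⟩
    rw [eLpNorm_exponent_top]
    exact lt_of_le_of_lt (eLpNormEssSup_le_of_ae_bound hae_bound)
      ENNReal.ofReal_lt_top
  have hesstop : eLpNorm a ∞ μ ≠ ∞ := hmeminf.2.ne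
  have hAle : ‖A‖ ≤ (eLpNorm a ∞ μ).toReal := by
    refine A.opNorm_le_bound ENNReal.toReal_nonneg fun f => ?_
    have h1 : eLpNorm (A f : AddCircle (2 * π) → ℂ) p μ
        ≤ eLpNorm a ∞ μ * eLpNorm (f : AddCircle (2 * π) → ℂ) p μ := by
      rw [eLpNorm_congr_ae (hall f)]
      have := eLpNorm_le_eLpNorm_top_mul_eLpNorm p a (Lp.aestronglyMeasurable f)
        (fun x y => x * y) 1 (Filter.Eventually.of_forall fun x => by rw [nnnorm_mul, one_mul])
      rwa [ENNReal.coe_one, one_mul] at this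
    rw [Lp.norm_def, Lp.norm_def]
    calc (eLpNorm (A f : AddCircle (2 * π) → ℂ) p μ).toReal
        ≤ (eLpNorm a ∞ μ * eLpNorm (f : AddCircle (2 * π) → ℂ) p μ).toReal :=
          ENNReal.toReal_mono (ENNReal.mul_ne_top hesstop (Lp.eLpNorm_ne_top f)) h1
      _ = (eLpNorm a ∞ μ).toReal * (eLpNorm (f : AddCircle (2 * π) → ℂ) p μ).toReal :=
          ENNReal.toReal_mul
  have hAge : (eLpNorm a ∞ μ).toReal ≤ ‖A‖ := by
    have h1 : eLpNorm a ∞ μ ≤ ENNReal.ofReal ‖A‖ := by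
      rw [eLpNorm_exponent_top]
      exact eLpNormEssSup_le_of_ae_bound hae_bound
    calc (eLpNorm a ∞ μ).toReal ≤ (ENNReal.ofReal ‖A‖).toReal :=
          ENNReal.toReal_mono ENNReal.ofReal_ne_top h1
      _ = ‖A‖ := ENNReal.toReal_ofReal hCnn
  exact ⟨a, hmeminf, hall, fun j k => (hcoeff j k).symm, le_antisymm hAle hAge⟩
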